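/- arXiv:2212.14717 — 5 statements merged into one kernel-verified Lean document; each statement's English description precedes it below -/
import Mathlib

section
/- If a binary vector x on the vertex set satisfies P(x)=0, where P(x) = Σ_{(v_i,v_j)} a_{ij}(1-δ_{c(v_i)c(v_j)}) x_i x_j, then the set S of vertices with x_i = 0 is a separation-node set, i.e., every connected component of the graph induced on V∖S is contained in a single community. -/
/-- The QUBO penalty term `P(x) = Σ_{i,j} a_{ij} (1 - δ_{c(v_i) c(v_j)}) x_i x_j`. -/
def sepPenalty {V C : Type*} [Fintype V] [DecidableEq C] (G : SimpleGraph V)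
    [DecidableRel G.Adj] (c : V → C) (x : V → ℕ) : ℕ :=
  ∑ i : V, ∑ j : V,
    (if G.Adj i j then 1 else 0) * (1 - (if c i = c j then 1 else 0)) * x i * x j

/-- `S` is a separation-node set: every connected component of the subgraph induced on
`V \ S` is contained in a single community. -/
def IsSepSet {V C : Type*} (G : SimpleGraph V) (c : V → C) (S : Set V) : Prop :=
  ∀ u v : ↥Sᶜ, (G.induce Sᶜ).Reachable u v → c u = c v

theorem SimpleGraph.Reachable.apply_eq_of_forall_adj {V β : Type*} {G : SimpleGraph V}
    {f : V → β} (hf : ∀ u v, G.Adj u v → f u = f v) {u v : V} (huv : G.Reachable u v) :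
    f u = f v := by
  obtain ⟨p⟩ := huv
  induction p with
  | nil => rfl
  | cons hadj _ ih => exact (hf _ _ hadj).trans ih

/-- The summands of `P` lie in `ℕ` and cannot cancel, so `P(x) = 0` forces every edge term to vanish. -/
theorem eq_of_adj_of_sepPenalty_eq_zero {V C : Type*} [Fintype V] [DecidableEq C]
    {G : SimpleGraph V} [DecidableRel G.Adj] {c : V → C} {x : V → ℕ}
    (hP : sepPenalty G c x = 0) {i j : V} (hij : G.Adj i j) (hi : x i ≠ 0) (hj : x j ≠ 0) :
    c i = c j := by
  have hterm := Finset.sum_eq_zero_iff.mp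
    (Finset.sum_eq_zero_iff.mp hP i (Finset.mem_univ i)) j (Finset.mem_univ j)
  by_contra hc
  simp [hij, hc, hi, hj] at hterm

theorem stmt_0_general {V C : Type*} [Fintype V] [DecidableEq C] (G : SimpleGraph V)
    [DecidableRel G.Adj] (c : V → C) (x : V → ℕ)
    (hP : sepPenalty G c x = 0) :
    IsSepSet G c {v | x v = 0} := fun _ _ hreach =>
  hreach.apply_eq_of_forall_adj (f := fun v : ↥{v | x v = 0}ᶜ => c v) fun u v huv =>
    eq_of_adj_of_sepPenalty_eq_zero hP huv u.2 v.2

theorem stmt_0 {V C : Type*} [Fintype V] [DecidableEq C] (G : SimpleGraph V)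
    [DecidableRel G.Adj] (c : V → C) (x : V → ℕ) (hx : ∀ v, x v = 0 ∨ x v = 1)
    (hP : sepPenalty G c x = 0) :
    IsSepSet G c {v | x v = 0} :=
  stmt_0_general G c x hP
end

section
/- A set S ⊆ V is a separation-node set if and only if its associated 0-flag vector x (with x_i = 0 iff v_i ∈ S) satisfies P(x) = 0. Equivalently, the set of all separation-node sets equals { {v_i : x_i = 0} : x ∈ {0,1}^{|V|}, P(x) = 0 }. -/
/-- The QUBO objective `f(x) = 2 P(x) - Σ_i x_i` (valued in `ℤ`). -/
def sepObjective {V C : Type*} [Fintype V] [DecidableEq C] (G : SimpleGraph V)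
    [DecidableRel G.Adj] (c : V → C) (x : V → ℕ) : ℤ :=
  2 * (sepPenalty G c x : ℤ) - ∑ v : V, (x v : ℤ)

/-- The 0-flag vector of a set `S`: `x_i = 0` iff `v_i ∈ S`. -/
def flagVec {V : Type*} [DecidableEq V] (S : Finset V) : V → ℕ :=
  fun v => if v ∈ S then 0 else 1

/-
A positive term of `P(x)` is exactly an edge between two communities with both endpoints
flagged `1`, so `P` vanishes on the flag vector of `S` iff every edge of the graph induced on
`V ∖ S` stays inside one community. Since connected components are generated by edges, this is
the separation property.
-/

open SimpleGraph

theorem SimpleGraph.Reachable.eq_of_forall_adj_eq {V α : Type*} {G : SimpleGraph V} {f : V → α}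
    (hf : ∀ u v, G.Adj u v → f u = f v) {u v : V} (huv : G.Reachable u v) : f u = f v := by
  rw [reachable_iff_reflTransGen] at huv
  induction huv with
  | refl => rfl
  | tail _ hadj ih => exact ih.trans (hf _ _ hadj)

theorem isSepSet_iff_forall_adj {V C : Type*} (G : SimpleGraph V) (c : V → C) (S : Set V) :
    IsSepSet G c S ↔ ∀ u v, G.Adj u v → u ∉ S → v ∉ S → c u = c v := by
  constructor
  · intro hS u v hadj hu hv
    exact hS ⟨u, hu⟩ ⟨v, hv⟩ (induce_adj.mpr hadj).reachable
  · intro h _ _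
    exact Reachable.eq_of_forall_adj_eq fun (u v : ↥Sᶜ) hadj => h u v (induce_adj.mp hadj) u.2 v.2

theorem sepPenalty_eq_zero_iff {V C : Type*} [Fintype V] [DecidableEq C] (G : SimpleGraph V)
    [DecidableRel G.Adj] (c : V → C) (x : V → ℕ) :
    sepPenalty G c x = 0 ↔ ∀ u v, G.Adj u v → c u ≠ c v → x u = 0 ∨ x v = 0 := by
  simp only [sepPenalty, Finset.sum_eq_zero_iff, Finset.mem_univ, true_implies]
  refine forall₂_congr fun u v => ?_
  by_cases hadj : G.Adj u v <;> by_cases hc : c u = c v <;> simp [hadj, hc]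

theorem flagVec_eq_zero_iff {V : Type*} [DecidableEq V] (S : Finset V) (v : V) :
    flagVec S v = 0 ↔ v ∈ S := by
  simp [flagVec]

theorem stmt_1 {V C : Type*} [Fintype V] [DecidableEq V] [DecidableEq C]
    (G : SimpleGraph V) [DecidableRel G.Adj] (c : V → C) :
    {S : Finset V | IsSepSet G c ↑S} =
      {S : Finset V | sepPenalty G c (flagVec S) = 0} := by
  ext S
  simp only [Set.mem_ofPred_eq, isSepSet_iff_forall_adj, sepPenalty_eq_zero_iff,
    flagVec_eq_zero_iff, Finset.mem_coe]
  refine forall₂_congr fun u v => forall_congr' fun _ => ?_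
  tauto
end

section
/- For every subset S ⊂ V whose 0-flag vector x satisfies P(x) > 0, there exists a strict superset S̃ ⊃ S whose 0-flag vector x̃ satisfies 2P(x̃) - Σ_i x̃_i < 2P(x) - Σ_i x_i; in fact, the objective value decreases by at least 1. -/
/-!
A positive penalty means some cross-community edge `ij` has both endpoints
outside `S`. Adding `i` to `S` removes the two ordered-pair contributions of that edge
and cannot increase any other one, so `P` drops by at least `2`, while `Σ x` drops by
exactly `1`; hence `f = 2P - Σ x` drops by at least `3`.
-/

theorem Finset.sum_add_two_le_sum {ι : Type*} [DecidableEq ι] {s : Finset ι} {f g : ι → ℕ}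
    (hfg : ∀ k ∈ s, f k ≤ g k) {a b : ι} (ha : a ∈ s) (hb : b ∈ s) (hab : a ≠ b)
    (hfa : f a < g a) (hfb : f b < g b) :
    ∑ k ∈ s, f k + 2 ≤ ∑ k ∈ s, g k := by
  have hb' : b ∈ s.erase a := Finset.mem_erase.2 ⟨hab.symm, hb⟩
  rw [← Finset.add_sum_erase s f ha, ← Finset.add_sum_erase s g ha,
    ← Finset.add_sum_erase _ f hb', ← Finset.add_sum_erase _ g hb']
  have hrest : ∑ k ∈ (s.erase a).erase b, f k ≤ ∑ k ∈ (s.erase a).erase b, g k :=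
    Finset.sum_le_sum fun k hk => hfg k (Finset.mem_of_mem_erase (Finset.mem_of_mem_erase hk))
  omega

section Flag

variable {V : Type*} [DecidableEq V]

theorem flagVec_insert_le (i : V) (S : Finset V) : flagVec (insert i S) ≤ flagVec S := by
  intro v
  unfold flagVec
  split_ifs <;> simp_all

theorem sum_flagVec [Fintype V] (S : Finset V) : ∑ v, flagVec S v = Sᶜ.card := by
  simp [flagVec, Finset.sum_ite, Finset.filter_not, Finset.compl_eq_univ_sdiff]

theorem sum_flagVec_insert [Fintype V] {i : V} {S : Finset V} (hi : i ∉ S) :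
    ∑ v, flagVec (insert i S) v + 1 = ∑ v, flagVec S v := by
  rw [sum_flagVec, sum_flagVec, Finset.compl_insert]
  exact Finset.card_erase_add_one (Finset.mem_compl.2 hi)

end Flag

section Penalty

variable {V C : Type*} [Fintype V] [DecidableEq C] (G : SimpleGraph V) [DecidableRel G.Adj]
  (c : V → C)

theorem exists_crossEdge_of_sepPenalty_pos [DecidableEq V] {S : Finset V}
    (hP : 0 < sepPenalty G c (flagVec S)) :
    ∃ i j, G.Adj i j ∧ c i ≠ c j ∧ i ∉ S ∧ j ∉ S := by
  obtain ⟨i, -, hi⟩ := Finset.exists_ne_zero_of_sum_ne_zero hP.ne'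
  obtain ⟨j, -, hj⟩ := Finset.exists_ne_zero_of_sum_ne_zero hi
  refine ⟨i, j, ?_, ?_, ?_, ?_⟩ <;> by_contra! h <;> simp [h, flagVec] at hj

theorem sepPenalty_insert_add_two_le [DecidableEq V] {S : Finset V} {i j : V}
    (hadj : G.Adj i j) (hc : c i ≠ c j) (hi : i ∉ S) (hj : j ∉ S) :
    sepPenalty G c (flagVec (insert i S)) + 2 ≤ sepPenalty G c (flagVec S) := by
  simp only [sepPenalty, ← Fintype.sum_prod_type']
  refine Finset.sum_add_two_le_sum (fun p _ => ?_) (Finset.mem_univ (i, j))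
    (Finset.mem_univ (j, i)) (by simp [hadj.ne]) ?_ ?_
  · gcongr <;> apply flagVec_insert_le
  · simp [flagVec, hadj, hc, hi, hj]
  · simp [flagVec, hadj.symm, hc.symm, hi, hj]

end Penalty

theorem stmt_2 {V C : Type*} [Fintype V] [DecidableEq V] [DecidableEq C]
    (G : SimpleGraph V) [DecidableRel G.Adj] (c : V → C) (S : Finset V)
    (hP : 0 < sepPenalty G c (flagVec S)) :
    ∃ T : Finset V, S ⊂ T ∧
      sepObjective G c (flagVec T) ≤ sepObjective G c (flagVec S) - 1 := by
  obtain ⟨i, j, hadj, hc, hi, hj⟩ := exists_crossEdge_of_sepPenalty_pos G c hP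
  refine ⟨insert i S, Finset.ssubset_insert hi, ?_⟩
  have hpen := sepPenalty_insert_add_two_le G c hadj hc hi hj
  have hsum := sum_flagVec_insert hi
  simp only [sepObjective, ← Nat.cast_sum]
  omega
end

section
/- The set of minimum-cardinality separation-node sets equals the set of vertex sets { v_i : x_i = 0 } ranging over minimizers x of the objective f(x) = 2P(x) - Σ_{v_i∈V} x_i over {0,1}^{|V|}. -/
/-!
For a 0/1 vector `x` with zero set `S`, the objective is `f(x) = 2 P(x) + |S| - |V|`, where `P(x)`
counts the ordered cross-community edges with both ends outside `S`. Adding to `S` one endpoint of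
each such edge yields a separation-node set `T` with `|T| ≤ |S| + P(x)`, so
`f(x) ≥ |T| - |V| + P(x)`, while `f = |T| - |V|` at the flag vector of any separation-node set `T`.
Hence the minimum of `f` is `|S_min| - |V|`, and at a minimizer `P(x) = 0`, so its zero set is a
separation-node set.
-/

open Finset

theorem flagVec_eq_zero_or_one {V : Type*} [DecidableEq V] (S : Finset V) (v : V) :
    flagVec S v = 0 ∨ flagVec S v = 1 := by
  unfold flagVec
  split_ifs <;> simp

theorem filter_flagVec_eq_zero {V : Type*} [Fintype V] [DecidableEq V] (S : Finset V) :
    univ.filter (fun v => flagVec S v = 0) = S := by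
  ext v
  by_cases h : v ∈ S <;> simp [flagVec, h]

theorem flagVec_filter_eq_zero {V : Type*} [Fintype V] [DecidableEq V] {x : V → ℕ}
    (hx : ∀ v, x v = 0 ∨ x v = 1) : flagVec (univ.filter fun v => x v = 0) = x := by
  funext v
  rcases hx v with h | h <;> simp [flagVec, h]

section SeparationQUBO

variable {V C : Type*} (G : SimpleGraph V) (c : V → C)

theorem isSepSet_iff_adj (S : Set V) :
    IsSepSet G c S ↔ ∀ a b, G.Adj a b → a ∉ S → b ∉ S → c a = c b := by
  constructor
  · intro h a b hab ha hb
    exact h ⟨a, ha⟩ ⟨b, hb⟩ (SimpleGraph.Adj.reachable (by simpa using hab))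
  · rintro h u v ⟨w⟩
    induction w with
    | nil => rfl
    | @cons p q _ hpq _ ih => exact (h p q hpq p.2 q.2).trans ih

variable [Fintype V] [DecidableEq V] [DecidableEq C] [DecidableRel G.Adj]

def crossPairs (S : Finset V) : Finset (V × V) :=
  univ.filter fun p => G.Adj p.1 p.2 ∧ c p.1 ≠ c p.2 ∧ p.1 ∉ S ∧ p.2 ∉ S

theorem sepPenalty_flagVec (S : Finset V) :
    sepPenalty G c (flagVec S) = #(crossPairs G c S) := by
  rw [crossPairs, card_filter, ← univ_product_univ, sum_product, sepPenalty]
  refine sum_congr rfl fun a _ => sum_congr rfl fun b _ => ?_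
  by_cases hab : G.Adj a b <;> by_cases hc : c a = c b <;> by_cases ha : a ∈ S <;>
    by_cases hb : b ∈ S <;> simp [flagVec, hab, hc, ha, hb]

theorem sepObjective_flagVec (S : Finset V) :
    sepObjective G c (flagVec S) = 2 * #(crossPairs G c S) + #S - Fintype.card V := by
  have hsum : ∑ v, (flagVec S v : ℤ) = Fintype.card V - #S := by
    simp [flagVec, sum_ite, filter_notMem_eq_sdiff, card_univ_sdiff, card_le_univ]
  rw [sepObjective, sepPenalty_flagVec, hsum]
  ring

theorem isSepSet_iff_crossPairs_eq_empty (S : Finset V) :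
    IsSepSet G c ↑S ↔ crossPairs G c S = ∅ := by
  simp only [isSepSet_iff_adj, crossPairs, filter_eq_empty_iff, mem_univ, true_implies,
    mem_coe, Prod.forall, not_and, not_not]
  exact forall₂_congr fun a b => ⟨fun h hab hc ha => by_contra fun hb => hc (h hab ha hb),
    fun h hab ha hb => by_contra fun hc => hb (h hab hc ha)⟩

theorem exists_isSepSet_card_le (S : Finset V) :
    ∃ T : Finset V, IsSepSet G c ↑T ∧ #T ≤ #S + #(crossPairs G c S) := by
  refine ⟨S ∪ (crossPairs G c S).image Prod.fst, ?_, ?_⟩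
  · rw [isSepSet_iff_adj]
    intro a b hab ha hb
    simp only [coe_union, coe_image, Set.mem_union, mem_coe, not_or] at ha hb
    by_contra hc
    refine ha.2 ⟨(a, b), ?_, rfl⟩
    simp [crossPairs, hab, hc, ha.1, hb.1]
  · exact (card_union_le _ _).trans (Nat.add_le_add_left card_image_le _)

theorem sepObjective_flagVec_of_isSepSet {S : Finset V} (hS : IsSepSet G c ↑S) :
    sepObjective G c (flagVec S) = #S - Fintype.card V := by
  rw [sepObjective_flagVec, (isSepSet_iff_crossPairs_eq_empty G c S).1 hS, card_empty]
  ring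

theorem isMinSepSet_iff_flagVec_minimizes (S : Finset V) :
    (IsSepSet G c ↑S ∧ ∀ T : Finset V, IsSepSet G c ↑T → #S ≤ #T) ↔
      ∀ R : Finset V, sepObjective G c (flagVec S) ≤ sepObjective G c (flagVec R) := by
  constructor
  · rintro ⟨hS, hmin⟩ R
    obtain ⟨T, hT, hTR⟩ := exists_isSepSet_card_le G c R
    have hST := hmin T hT
    rw [sepObjective_flagVec_of_isSepSet G c hS, sepObjective_flagVec]
    omega
  · intro h
    obtain ⟨T, hT, hTS⟩ := exists_isSepSet_card_le G c S
    have hST := h T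
    rw [sepObjective_flagVec, sepObjective_flagVec_of_isSepSet G c hT] at hST
    -- `2 P + |S| ≤ |T| ≤ |S| + P` forces `P = 0`
    have hS : IsSepSet G c ↑S := by
      rw [isSepSet_iff_crossPairs_eq_empty, ← card_eq_zero]
      omega
    refine ⟨hS, fun T' hT' => ?_⟩
    have hST' := h T'
    rw [sepObjective_flagVec_of_isSepSet G c hS, sepObjective_flagVec_of_isSepSet G c hT'] at hST'
    omega

end SeparationQUBO

theorem stmt_4_general {V C : Type*} [Fintype V] [DecidableEq C]
    (G : SimpleGraph V) [DecidableRel G.Adj] (c : V → C) :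
    {S : Finset V | IsSepSet G c ↑S ∧
        ∀ T : Finset V, IsSepSet G c ↑T → S.card ≤ T.card} =
      {S : Finset V | ∃ x : V → ℕ, (∀ v, x v = 0 ∨ x v = 1) ∧
        (∀ y : V → ℕ, (∀ v, y v = 0 ∨ y v = 1) →
          sepObjective G c x ≤ sepObjective G c y) ∧
        S = Finset.univ.filter (fun v => x v = 0)} := by
  classical
  ext S
  simp only [Set.mem_ofPred_eq, isMinSepSet_iff_flagVec_minimizes]
  constructor
  · intro h
    refine ⟨flagVec S, flagVec_eq_zero_or_one S, fun y hy => ?_, (filter_flagVec_eq_zero S).symm⟩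
    rw [← flagVec_filter_eq_zero hy]
    exact h _
  · rintro ⟨x, hx, hmin, rfl⟩ R
    rw [flagVec_filter_eq_zero hx]
    exact hmin _ (flagVec_eq_zero_or_one R)

theorem stmt_4 {V C : Type*} [Fintype V] [DecidableEq V] [DecidableEq C]
    (G : SimpleGraph V) [DecidableRel G.Adj] (c : V → C) :
    {S : Finset V | IsSepSet G c ↑S ∧
        ∀ T : Finset V, IsSepSet G c ↑T → S.card ≤ T.card} =
      {S : Finset V | ∃ x : V → ℕ, (∀ v, x v = 0 ∨ x v = 1) ∧
        (∀ y : V → ℕ, (∀ v, y v = 0 ∨ y v = 1) →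
          sepObjective G c x ≤ sepObjective G c y) ∧
        S = Finset.univ.filter (fun v => x v = 0)} :=
  stmt_4_general G c
end

section
/- For the Max-Clique QUBO on a graph G=(V,E): minimizers x of 2·Σ_{(v_i,v_j)∈V², i≠j}(1 - a_{ij}) x_i x_j - Σ_i x_i over {0,1}^{|V|} correspond exactly to maximum cliques of G, i.e., x is a minimizer iff {v_i : x_i = 1} is a clique of maximum cardinality. -/
/-- The Max-Clique QUBO objective
`2 Σ_{i ≠ j} (1 - a_{ij}) x_i x_j - Σ_i x_i` (valued in `ℤ`). -/
def cliqueObjective {V : Type*} [Fintype V] [DecidableEq V] (G : SimpleGraph V)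
    [DecidableRel G.Adj] (x : V → ℕ) : ℤ :=
  2 * ∑ i : V, ∑ j : V,
      (if i ≠ j then (1 - (if G.Adj i j then (1 : ℤ) else 0)) * x i * x j else 0) -
    ∑ i : V, (x i : ℤ)

/-!
On a 0/1 vector with support `S` the objective equals `2·p(S) - |S|`, where `p(S)` counts the
ordered non-adjacent pairs of distinct vertices of `S`; on a clique it is `-|S|`. If `S` is not a
clique, deleting one endpoint `u` of a non-edge `uv` removes at least the penalised pair `(u, v)`,
worth `2`, while `|S|` drops by one, so the objective strictly drops. Hence every minimizer is a clique, every set is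
beaten by a clique, and the minimum value is minus the clique number.
-/

open Finset

namespace SimpleGraph

variable {V : Type*} (G : SimpleGraph V) [DecidableRel G.Adj]

def nonAdjPairs (S : Finset V) : Finset (V × V) :=
  S.offDiag.filter fun p => ¬ G.Adj p.1 p.2

/-- The QUBO objective evaluated at the indicator vector of `S`. -/
def cliqueEnergy (S : Finset V) : ℤ :=
  2 * #(G.nonAdjPairs S) - #S

variable {G}

theorem nonAdjPairs_eq_empty_of_isClique {S : Finset V} (hS : G.IsClique (S : Set V)) :
    G.nonAdjPairs S = ∅ := by
  refine filter_eq_empty_iff.2 fun p hp => ?_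
  obtain ⟨h1, h2, hne⟩ := mem_offDiag.1 hp
  exact not_not.2 (hS h1 h2 hne)

theorem cliqueEnergy_of_isClique {S : Finset V} (hS : G.IsClique (S : Set V)) :
    G.cliqueEnergy S = -#S := by
  simp [cliqueEnergy, nonAdjPairs_eq_empty_of_isClique hS]

theorem exists_cliqueEnergy_erase_lt_of_not_isClique [DecidableEq V] {S : Finset V}
    (hS : ¬ G.IsClique (S : Set V)) :
    ∃ u ∈ S, G.cliqueEnergy (S.erase u) < G.cliqueEnergy S := by
  obtain ⟨u, hu, v, hv, huv, hadj⟩ : ∃ u ∈ S, ∃ v ∈ S, u ≠ v ∧ ¬ G.Adj u v := by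
    simpa [isClique_iff, Set.Pairwise] using hS
  have hpairs : G.nonAdjPairs (S.erase u) ⊂ G.nonAdjPairs S := by
    refine ssubset_iff_of_subset (filter_subset_filter _ (offDiag_mono (erase_subset u S))) |>.2
      ⟨(u, v), ?_, ?_⟩
    · simp [hu, hv, huv, hadj]
    · simp
  have hcard := card_lt_card hpairs
  have herase : (#(S.erase u) : ℤ) = #S - 1 := by
    rw [card_erase_of_mem hu, Nat.cast_pred (card_pos.2 ⟨u, hu⟩)]
  refine ⟨u, hu, ?_⟩
  unfold cliqueEnergy
  omega

theorem exists_isClique_cliqueEnergy_le [DecidableEq V] (S : Finset V) :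
    ∃ T : Finset V, G.IsClique (T : Set V) ∧ G.cliqueEnergy T ≤ G.cliqueEnergy S := by
  induction S using Finset.strongInduction with
  | H S ih =>
    by_cases hS : G.IsClique (S : Set V)
    · exact ⟨S, hS, le_rfl⟩
    · obtain ⟨u, hu, hlt⟩ := exists_cliqueEnergy_erase_lt_of_not_isClique hS
      obtain ⟨T, hT, hle⟩ := ih _ (erase_ssubset hu)
      exact ⟨T, hT, hle.trans hlt.le⟩

theorem cliqueEnergy_minimal_iff [DecidableEq V] (S : Finset V) :
    (∀ T : Finset V, G.cliqueEnergy S ≤ G.cliqueEnergy T) ↔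
      G.IsClique (S : Set V) ∧ ∀ T : Finset V, G.IsClique (T : Set V) → #T ≤ #S := by
  constructor
  · intro hmin
    have hS : G.IsClique (S : Set V) := by
      by_contra hS
      obtain ⟨u, -, hlt⟩ := exists_cliqueEnergy_erase_lt_of_not_isClique hS
      exact (hmin _).not_gt hlt
    refine ⟨hS, fun T hT => ?_⟩
    have := hmin T
    rw [cliqueEnergy_of_isClique hS, cliqueEnergy_of_isClique hT] at this
    omega
  · rintro ⟨hS, hmax⟩ T
    obtain ⟨T', hT', hle⟩ := exists_isClique_cliqueEnergy_le (G := G) T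
    rw [cliqueEnergy_of_isClique hT'] at hle
    rw [cliqueEnergy_of_isClique hS]
    have := hmax T' hT'
    omega

end SimpleGraph

open SimpleGraph

theorem cliqueObjective_eq_cliqueEnergy {V : Type*} [Fintype V] [DecidableEq V]
    (G : SimpleGraph V) [DecidableRel G.Adj] {x : V → ℕ} (hx : ∀ v, x v = 0 ∨ x v = 1) :
    cliqueObjective G x = G.cliqueEnergy (univ.filter fun v => x v = 1) := by
  set S := univ.filter fun v => x v = 1
  have hmem : ∀ v, (x v : ℤ) = if v ∈ S then 1 else 0 := fun v => by
    rcases hx v with h | h <;> simp [S, h]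
  have hterm : ∀ i j : V,
      (if i ≠ j then (1 - (if G.Adj i j then (1 : ℤ) else 0)) * x i * x j else 0) =
      if (i, j) ∈ G.nonAdjPairs S then 1 else 0 := fun i j => by
    rw [hmem i, hmem j]
    by_cases hi : i ∈ S <;> by_cases hj : j ∈ S <;> by_cases hij : i = j <;>
      by_cases hadj : G.Adj i j <;> simp [nonAdjPairs, hi, hj, hij, hadj]
  have hpairs : ∑ i : V, ∑ j : V,
      (if i ≠ j then (1 - (if G.Adj i j then (1 : ℤ) else 0)) * x i * x j else 0) =
      #(G.nonAdjPairs S) := by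
    simp only [hterm]
    rw [← sum_product', univ_product_univ, sum_boole, filter_mem_eq_inter, univ_inter]
  have hsingles : ∑ i : V, (x i : ℤ) = #S := by
    simp only [hmem, sum_boole, filter_mem_eq_inter, univ_inter]
  rw [cliqueObjective, hpairs, hsingles, cliqueEnergy]

theorem cliqueObjective_indicator {V : Type*} [Fintype V] [DecidableEq V]
    (G : SimpleGraph V) [DecidableRel G.Adj] (T : Finset V) :
    cliqueObjective G (fun v => if v ∈ T then 1 else 0) = G.cliqueEnergy T := by
  rw [cliqueObjective_eq_cliqueEnergy G fun v => by by_cases v ∈ T <;> simp [*]]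
  congr 1
  ext v
  by_cases v ∈ T <;> simp [*]

theorem stmt_14 {V : Type*} [Fintype V] [DecidableEq V] (G : SimpleGraph V)
    [DecidableRel G.Adj] (x : V → ℕ) (hx : ∀ v, x v = 0 ∨ x v = 1) :
    (∀ y : V → ℕ, (∀ v, y v = 0 ∨ y v = 1) →
        cliqueObjective G x ≤ cliqueObjective G y) ↔
      (G.IsClique {v : V | x v = 1} ∧
        ∀ T : Finset V, G.IsClique ↑T →
          T.card ≤ (Finset.univ.filter (fun v => x v = 1)).card) := by
  have hset : {v : V | x v = 1} = ↑(univ.filter fun v => x v = 1) := by simp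
  rw [hset, ← cliqueEnergy_minimal_iff, cliqueObjective_eq_cliqueEnergy G hx]
  constructor
  · intro hmin T
    rw [← cliqueObjective_indicator G T]
    exact hmin (fun v => if v ∈ T then 1 else 0) fun v => by by_cases v ∈ T <;> simp [*]
  · intro hmin y hy
    rw [cliqueObjective_eq_cliqueEnergy G hy]
    exact hmin _
end
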